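/- Let n ≥ 3 be an integer, let ν ≥ (n−2)/2 be real, let 1 ≤ q < ∞, and let σ > n/q. Then there exists a constant C > 0 (depending only on n, ν, q, σ) such that for every 0 < λ ≤ 1 and every r > 0, (∫₀^∞ ((rs)^{−(n−2)/2} |J_ν(λr) J_ν(λs)|)^q (1+s)^{−qσ} s^{n−1} ds)^{1/q} ≤ C λ^{n−2} (1+λr)^{−(n−1)/2}. -/

import Mathlib

/-!
On `(0, 1]` the power series gives `|J_ν(x)| ≲ x ^ ν`. Writing `J_ν(x) = (x/2)^ν G(x²/4)`, the
function `u(x) = (x/2)^(ν+1/2) G(x²/4)` solves `u'' + (1 - (ν² - 1/4)/x²) u = 0`; for `ν ≥ 1/2` the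
energy `(u² + u'²) exp ((ν² - 1/4)/x)` is nonincreasing, whence `|J_ν(x)| ≲ x^(-1/2)` on `[1, ∞)`.
Hence `|J_ν(x)| ≲ x^μ (1 + x)^(-μ-1/2)` with `μ = (n-2)/2 ≤ ν`, so the kernel is bounded by
`K² λ^(n-2) (1 + λr)^(-(n-1)/2)` uniformly in `s`, and the weight `(1 + s)^(-qσ) s^(n-1)` is
integrable on `(0, ∞)` because `qσ > n`.
-/

open MeasureTheory Real Set

/-- The Bessel function of the first kind of order `ν`, defined by its power series
(with the convention `1/Γ = 0` at the poles of `Γ`). -/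
noncomputable def besselJ (ν : ℝ) (x : ℝ) : ℝ :=
  ∑' k : ℕ, ((-1 : ℝ) ^ k / ((k.factorial : ℝ) * Real.Gamma (ν + (k : ℝ) + 1))) *
    (x / 2) ^ (2 * (k : ℝ) + ν)

open scoped Nat

section FactorialBoundedSeries

variable {b : ℕ → ℝ} {M : ℝ}

noncomputable def powerSeriesSum (b : ℕ → ℝ) (t : ℝ) : ℝ := ∑' k, b k * t ^ k

def derivCoeff (b : ℕ → ℝ) (k : ℕ) : ℝ := (k + 1) * b (k + 1)

lemma abs_derivCoeff_le (hb : ∀ k, |b k| ≤ M / k !) (k : ℕ) : |derivCoeff b k| ≤ M / k ! := by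
  have hk : (0 : ℝ) < k + 1 := by positivity
  calc |derivCoeff b k| = (k + 1) * |b (k + 1)| := by
        rw [derivCoeff, abs_mul, abs_of_pos hk]
    _ ≤ (k + 1) * (M / (k + 1)!) := by gcongr; exact hb _
    _ = M / k ! := by rw [Nat.factorial_succ]; push_cast; field_simp

lemma abs_mul_pow_le (hb : ∀ k, |b k| ≤ M / k !) (t : ℝ) (k : ℕ) :
    |b k * t ^ k| ≤ M * (|t| ^ k / k !) := by
  rw [abs_mul, abs_pow]
  calc |b k| * |t| ^ k ≤ M / k ! * |t| ^ k := by gcongr; exact hb k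
    _ = M * (|t| ^ k / k !) := by ring

lemma summable_mul_pow (hb : ∀ k, |b k| ≤ M / k !) (t : ℝ) :
    Summable fun k => b k * t ^ k :=
  .of_norm_bounded ((Real.summable_pow_div_factorial |t|).mul_left M) (abs_mul_pow_le hb t)

lemma abs_powerSeriesSum_le (hb : ∀ k, |b k| ≤ M / k !) (t : ℝ) :
    |powerSeriesSum b t| ≤ M * Real.exp |t| := by
  have hexp := (NormedSpace.expSeries_div_hasSum_exp |t|).mul_left M
  rw [← Real.exp_eq_exp_ℝ] at hexp
  exact tsum_of_norm_bounded (f := fun k => b k * t ^ k) hexp (abs_mul_pow_le hb t)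

lemma hasDerivAt_powerSeriesSum (hb : ∀ k, |b k| ≤ M / k !) (t : ℝ) :
    HasDerivAt (powerSeriesSum b) (powerSeriesSum (derivCoeff b) t) t := by
  set R := |t| + 1
  have htR : t ∈ Metric.ball (0 : ℝ) R := by simp [R]
  have hterm : ∀ k y, y ∈ Metric.ball (0 : ℝ) R →
      HasDerivAt (fun u => b (k + 1) * u ^ (k + 1)) (derivCoeff b k * y ^ k) y := by
    intro k y _
    refine ((hasDerivAt_pow (k + 1) y).const_mul (b (k + 1))).congr_deriv ?_
    rw [add_tsub_cancel_right, derivCoeff]; push_cast; ring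
  have hbound : ∀ k y, y ∈ Metric.ball (0 : ℝ) R →
      ‖derivCoeff b k * y ^ k‖ ≤ M * (R ^ k / k !) := by
    intro k y hy
    refine (abs_mul_pow_le (abs_derivCoeff_le hb) y k).trans ?_
    have hyR : |y| ≤ R := by simpa using (Metric.mem_ball.1 hy).le
    have hM : 0 ≤ M := by simpa using (abs_nonneg (b 0)).trans (hb 0)
    gcongr
  have hshift := hasDerivAt_tsum_of_isPreconnected
    ((Real.summable_pow_div_factorial R).mul_left M) Metric.isOpen_ball
    (convex_ball (0 : ℝ) R).isPreconnected hterm hbound htR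
    ((summable_nat_add_iff 1).2 (summable_mul_pow hb t)) htR
  have hsplit : powerSeriesSum b = fun u => b 0 + ∑' k, b (k + 1) * u ^ (k + 1) := by
    funext u
    rw [powerSeriesSum, tsum_eq_zero_add' ((summable_nat_add_iff 1).2 (summable_mul_pow hb u))]
    simp
  rw [hsplit]
  exact hshift.const_add _

lemma powerSeriesSum_ode {ν : ℝ} (hb : ∀ k, |b k| ≤ M / k !)
    (hrec : ∀ k : ℕ, (ν + k + 1) * derivCoeff b k = -b k) (t : ℝ) :
    t * powerSeriesSum (derivCoeff (derivCoeff b)) t + (ν + 1) * powerSeriesSum (derivCoeff b) t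
      + powerSeriesSum b t = 0 := by
  set f : ℕ → ℝ := fun k => k * derivCoeff b k * t ^ k
  have hdb := abs_derivCoeff_le hb
  have hf_succ : Summable fun k => f (k + 1) := by
    refine ((summable_mul_pow (abs_derivCoeff_le hdb) t).mul_left t).congr fun k => ?_
    simp only [f, derivCoeff]; push_cast; ring
  have hmul : t * powerSeriesSum (derivCoeff (derivCoeff b)) t = ∑' k, f k := by
    rw [tsum_eq_zero_add' hf_succ, powerSeriesSum, ← tsum_mul_left]
    simp only [f, derivCoeff, CharP.cast_eq_zero, zero_mul, zero_add]
    exact tsum_congr fun k => by push_cast; ring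
  have hf := (summable_nat_add_iff 1).1 hf_succ
  have hdbt := (summable_mul_pow hdb t).mul_left (ν + 1)
  rw [hmul, powerSeriesSum, powerSeriesSum, ← tsum_mul_left, ← hf.tsum_add hdbt,
    ← (hf.add hdbt).tsum_add (summable_mul_pow hb t)]
  refine (tsum_congr fun k => ?_).trans tsum_zero
  linear_combination t ^ k * hrec k

end FactorialBoundedSeries

section BesselSeries

variable {ν : ℝ}

noncomputable def besselCoeff (ν : ℝ) (k : ℕ) : ℝ := (-1) ^ k / (k ! * Gamma (ν + k + 1))

lemma Gamma_add_one_le_Gamma_add_nat_add_one (hν : 0 ≤ ν) (k : ℕ) :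
    Gamma (ν + 1) ≤ Gamma (ν + k + 1) := by
  induction k with
  | zero => simp
  | succ k ih =>
    have hk : 0 < ν + k + 1 := by positivity
    rw [Nat.cast_succ, show ν + (k + 1) + 1 = ν + k + 1 + 1 by ring, Gamma_add_one hk.ne']
    nlinarith [Gamma_pos_of_pos hk]

lemma abs_besselCoeff_le (hν : 0 ≤ ν) (k : ℕ) :
    |besselCoeff ν k| ≤ (Gamma (ν + 1))⁻¹ / k ! := by
  have hΓ := Gamma_pos_of_pos (by positivity : 0 < ν + 1)
  have hΓk := Gamma_pos_of_pos (by positivity : 0 < ν + k + 1)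
  rw [besselCoeff, abs_div, abs_pow, abs_neg, abs_one, one_pow, abs_of_pos (by positivity),
    inv_eq_one_div, div_div, one_div_le_one_div (by positivity) (by positivity), mul_comm]
  gcongr
  exact Gamma_add_one_le_Gamma_add_nat_add_one hν k

lemma besselCoeff_recurrence (hν : -1 < ν) (k : ℕ) :
    (ν + k + 1) * derivCoeff (besselCoeff ν) k = -besselCoeff ν k := by
  have hk : 0 < ν + k + 1 := by linarith [k.cast_nonneg (α := ℝ)]
  have hΓ : Gamma (ν + k + 1) ≠ 0 := (Gamma_pos_of_pos hk).ne'
  rw [derivCoeff, besselCoeff, besselCoeff, Nat.factorial_succ, Nat.cast_succ,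
    show ν + (k + 1) + 1 = ν + k + 1 + 1 by ring, Gamma_add_one hk.ne']
  push_cast
  field_simp
  ring

lemma besselJ_eq_rpow_mul_powerSeriesSum {x : ℝ} (hx : 0 < x) :
    besselJ ν x = (x / 2) ^ ν * powerSeriesSum (besselCoeff ν) (x ^ 2 / 4) := by
  rw [besselJ, powerSeriesSum, ← tsum_mul_left]
  refine tsum_congr fun k => ?_
  have hx2 : 0 < x / 2 := by positivity
  rw [rpow_add hx2, rpow_mul hx2.le, rpow_two, rpow_natCast, besselCoeff]
  ring

lemma abs_besselJ_le_of_le_one (hν : 0 ≤ ν) {x : ℝ} (hx : 0 < x) (hx1 : x ≤ 1) :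
    |besselJ ν x| ≤ (Gamma (ν + 1))⁻¹ * exp (1 / 4) * x ^ ν := by
  have hG : |powerSeriesSum (besselCoeff ν) (x ^ 2 / 4)| ≤ (Gamma (ν + 1))⁻¹ * exp (1 / 4) := by
    refine (abs_powerSeriesSum_le (abs_besselCoeff_le hν) _).trans ?_
    gcongr
    rw [abs_of_nonneg (by positivity)]
    nlinarith
  rw [besselJ_eq_rpow_mul_powerSeriesSum hx, abs_mul, abs_of_nonneg (by positivity), mul_comm]
  gcongr
  linarith

end BesselSeries

lemma sq_le_of_hasDerivAt_of_hasDerivAt_neg_mul {u u' : ℝ → ℝ} {a x₀ x : ℝ} (ha : 0 ≤ a)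
    (hx₀ : 0 < x₀) (hu : ∀ y, x₀ ≤ y → HasDerivAt u (u' y) y)
    (hu' : ∀ y, x₀ ≤ y → HasDerivAt u' (-(1 - a / y ^ 2) * u y) y) (hx : x₀ ≤ x) :
    u x ^ 2 ≤ (u x₀ ^ 2 + u' x₀ ^ 2) * exp (a / x₀) := by
  set F : ℝ → ℝ := fun y => (u y ^ 2 + u' y ^ 2) * exp (a / y)
  have hF : ∀ y, x₀ ≤ y → HasDerivAt F (-(exp (a / y) * (a / y ^ 2 * (u y - u' y) ^ 2))) y := by
    intro y hy
    have hy0 : y ≠ 0 := by linarith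
    have hexp := ((hasDerivAt_inv hy0).const_mul a).exp
    simp only [← div_eq_mul_inv] at hexp
    refine (((hu y hy).pow 2).add ((hu' y hy).pow 2)).mul hexp |>.congr_deriv ?_
    simp only [Pi.add_apply, Pi.pow_apply]
    field_simp
    ring
  have hanti : AntitoneOn F (Ici x₀) :=
    antitoneOn_of_hasDerivWithinAt_nonpos (convex_Ici x₀)
      (fun y hy => (hF y hy).continuousAt.continuousWithinAt)
      (fun y hy => (hF y (le_of_lt (by simpa using hy))).hasDerivWithinAt)
      fun y _ => neg_nonpos.2 (by positivity)
  have hexp_ge : 1 ≤ exp (a / x) := one_le_exp (div_nonneg ha (by linarith))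
  calc u x ^ 2 ≤ (u x ^ 2 + u' x ^ 2) * exp (a / x) := by nlinarith [sq_nonneg (u' x)]
    _ ≤ F x₀ := hanti self_mem_Ici hx hx

section LiouvilleForm

variable {ν x : ℝ} {G G₁ G₂ : ℝ → ℝ}

lemma hasDerivAt_half_rpow_mul {f : ℝ → ℝ} {f' m : ℝ} (hx : 0 < x) (hf : HasDerivAt f f' x) :
    HasDerivAt (fun y => (y / 2) ^ m * f y) ((x / 2) ^ m * (m / x * f x + f')) x := by
  have hpow := ((hasDerivAt_id x).div_const 2).rpow_const (p := m) (Or.inl (by positivity))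
  refine (hpow.mul hf).congr_deriv ?_
  rw [id, rpow_sub_one (by positivity)]
  field_simp

noncomputable def liouvilleForm (ν : ℝ) (G : ℝ → ℝ) (x : ℝ) : ℝ :=
  (x / 2) ^ (ν + 1 / 2) * G (x ^ 2 / 4)

noncomputable def liouvilleFormDeriv (ν : ℝ) (G G₁ : ℝ → ℝ) (x : ℝ) : ℝ :=
  (x / 2) ^ (ν + 1 / 2) * ((ν + 1 / 2) / x * G (x ^ 2 / 4) + x / 2 * G₁ (x ^ 2 / 4))

lemma hasDerivAt_sq_div_four (x : ℝ) : HasDerivAt (fun y : ℝ => y ^ 2 / 4) (x / 2) x :=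
  ((hasDerivAt_pow 2 x).div_const 4).congr_deriv (by push_cast; ring)

lemma hasDerivAt_liouvilleForm (hx : 0 < x) (hG : HasDerivAt G (G₁ (x ^ 2 / 4)) (x ^ 2 / 4)) :
    HasDerivAt (liouvilleForm ν G) (liouvilleFormDeriv ν G G₁ x) x :=
  (hasDerivAt_half_rpow_mul hx (hG.comp x (hasDerivAt_sq_div_four x))).congr_deriv
    (by rw [liouvilleFormDeriv, Function.comp_apply]; ring)

lemma hasDerivAt_liouvilleFormDeriv (hx : 0 < x)
    (hG : HasDerivAt G (G₁ (x ^ 2 / 4)) (x ^ 2 / 4))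
    (hG₁ : HasDerivAt G₁ (G₂ (x ^ 2 / 4)) (x ^ 2 / 4))
    (hode : x ^ 2 / 4 * G₂ (x ^ 2 / 4) + (ν + 1) * G₁ (x ^ 2 / 4) + G (x ^ 2 / 4) = 0) :
    HasDerivAt (liouvilleFormDeriv ν G G₁)
      (-(1 - (ν ^ 2 - 1 / 4) / x ^ 2) * liouvilleForm ν G x) x := by
  have hq := hasDerivAt_sq_div_four x
  have hinner : HasDerivAt (fun y => (ν + 1 / 2) / y * G (y ^ 2 / 4) + y / 2 * G₁ (y ^ 2 / 4))
      (-(ν + 1 / 2) / x ^ 2 * G (x ^ 2 / 4) + (ν + 1 / 2) / x * (G₁ (x ^ 2 / 4) * (x / 2))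
        + (1 / 2 * G₁ (x ^ 2 / 4) + x / 2 * (G₂ (x ^ 2 / 4) * (x / 2)))) x := by
    have h1 := ((hasDerivAt_inv hx.ne').const_mul (ν + 1 / 2)).mul (hG.comp x hq)
    have h2 := ((hasDerivAt_id x).div_const 2).mul (hG₁.comp x hq)
    refine (h1.add h2).congr_deriv ?_ |>.congr_of_eventuallyEq ?_
    · simp only [id, Function.comp_apply]; field_simp
    · exact .of_forall fun y => by simp [div_eq_mul_inv]
  refine (hasDerivAt_half_rpow_mul hx hinner).congr_deriv ?_
  rw [liouvilleForm]
  field_simp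
  linear_combination 16 * x ^ 2 * hode

end LiouvilleForm

lemma abs_le_rpow_mul_one_add_rpow_neg {f : ℝ → ℝ} {μ A B x : ℝ} (hμ : -(1 / 2) ≤ μ)
    (hsmall : ∀ y, 0 < y → y ≤ 1 → |f y| ≤ A * y ^ μ)
    (hlarge : ∀ y, 1 ≤ y → |f y| ≤ B * y ^ (-(1 / 2) : ℝ)) (hx : 0 < x) :
    |f x| ≤ 2 ^ (μ + 1 / 2) * max A B * (x ^ μ * (1 + x) ^ (-(μ + 1 / 2))) := by
  set e := μ + 1 / 2 with he_def
  have he : 0 ≤ e := by rw [he_def]; linarith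
  have hAB : 0 ≤ max A B :=
    le_max_of_le_right (by simpa using (abs_nonneg _).trans (hlarge 1 le_rfl))
  have hmean : ((1 + x) / 2) ^ (-e) = 2 ^ e * (1 + x) ^ (-e) := by
    rw [div_rpow (by positivity) (by norm_num), rpow_neg (by norm_num : (0 : ℝ) ≤ 2)]
    field_simp
  suffices h : |f x| ≤ max A B * (x ^ μ * ((1 + x) / 2) ^ (-e)) by
    rw [hmean] at h; linarith
  rcases le_total x 1 with hx1 | hx1
  · have hone : 1 ≤ ((1 + x) / 2) ^ (-e) :=
      one_le_rpow_of_pos_of_le_one_of_nonpos (by positivity) (by linarith) (by linarith)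
    calc |f x| ≤ A * x ^ μ := hsmall x hx hx1
      _ ≤ max A B * x ^ μ := by gcongr; exact le_max_left A B
      _ ≤ max A B * x ^ μ * ((1 + x) / 2) ^ (-e) :=
        le_mul_of_one_le_right (mul_nonneg hAB (by positivity)) hone
      _ = max A B * (x ^ μ * ((1 + x) / 2) ^ (-e)) := mul_assoc _ _ _
  · calc |f x| ≤ B * x ^ (-(1 / 2) : ℝ) := hlarge x hx1
      _ = B * (x ^ μ * x ^ (-e)) := by rw [← rpow_add hx, he_def]; ring_nf
      _ ≤ max A B * (x ^ μ * ((1 + x) / 2) ^ (-e)) := by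
        have h : x ^ (-e) ≤ ((1 + x) / 2) ^ (-e) :=
          rpow_le_rpow_of_nonpos (by positivity) (by linarith) (by linarith)
        exact mul_le_mul (le_max_right A B) (mul_le_mul_of_nonneg_left h (by positivity))
          (by positivity) hAB

section BesselBounds

variable {ν : ℝ}

lemma besselJ_eq_half_rpow_mul_liouvilleForm {x : ℝ} (hx : 0 < x) :
    besselJ ν x =
      (x / 2) ^ (-(1 / 2) : ℝ) * liouvilleForm ν (powerSeriesSum (besselCoeff ν)) x := by
  rw [besselJ_eq_rpow_mul_powerSeriesSum hx, liouvilleForm, ← mul_assoc,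
    ← rpow_add (by positivity)]
  ring_nf

lemma exists_abs_besselJ_le_rpow_neg_half (hν : 1 / 2 ≤ ν) :
    ∃ B, ∀ x, 1 ≤ x → |besselJ ν x| ≤ B * x ^ (-(1 / 2) : ℝ) := by
  set b := besselCoeff ν
  have hb := abs_besselCoeff_le (by linarith : 0 ≤ ν)
  have hG := hasDerivAt_powerSeriesSum hb
  have hG₁ := hasDerivAt_powerSeriesSum (abs_derivCoeff_le hb)
  have hode := powerSeriesSum_ode hb (besselCoeff_recurrence (by linarith))
  set u := liouvilleForm ν (powerSeriesSum b)
  set u' := liouvilleFormDeriv ν (powerSeriesSum b) (powerSeriesSum (derivCoeff b))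
  refine ⟨√((u 1 ^ 2 + u' 1 ^ 2) * exp (ν ^ 2 - 1 / 4)) / 2 ^ (-(1 / 2) : ℝ), fun x hx => ?_⟩
  have hsq : u x ^ 2 ≤ (u 1 ^ 2 + u' 1 ^ 2) * exp ((ν ^ 2 - 1 / 4) / 1) :=
    sq_le_of_hasDerivAt_of_hasDerivAt_neg_mul (by nlinarith) one_pos
      (fun y hy => hasDerivAt_liouvilleForm (by linarith) (hG _))
      (fun y hy => hasDerivAt_liouvilleFormDeriv (by linarith) (hG _) (hG₁ _) (hode _)) hx
  rw [div_one] at hsq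
  calc |besselJ ν x| = |u x| / 2 ^ (-(1 / 2) : ℝ) * x ^ (-(1 / 2) : ℝ) := by
        rw [besselJ_eq_half_rpow_mul_liouvilleForm (by linarith), abs_mul,
          abs_of_pos (by positivity), div_rpow (by linarith) (by norm_num)]
        ring
    _ ≤ _ := by gcongr; exact abs_le_sqrt hsq

lemma exists_abs_besselJ_le {μ : ℝ} (hν : 1 / 2 ≤ ν) (hμ : -(1 / 2) ≤ μ) (hμν : μ ≤ ν) :
    ∃ K, ∀ x, 0 < x → |besselJ ν x| ≤ K * (x ^ μ * (1 + x) ^ (-(μ + 1 / 2))) := by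
  obtain ⟨B, hB⟩ := exists_abs_besselJ_le_rpow_neg_half hν
  have hsmall : ∀ x, 0 < x → x ≤ 1 → |besselJ ν x| ≤ (Gamma (ν + 1))⁻¹ * exp (1 / 4) * x ^ μ :=
    fun x hx hx1 => (abs_besselJ_le_of_le_one (by linarith) hx hx1).trans
      (mul_le_mul_of_nonneg_left (rpow_le_rpow_of_exponent_ge hx hx1 hμν) (by positivity))
  exact ⟨_, fun x hx => abs_le_rpow_mul_one_add_rpow_neg hμ hsmall hB hx⟩

end BesselBounds

lemma integrableOn_one_add_rpow_neg_mul_rpow {c p : ℝ} (hp : -1 < p) (hpc : p + 1 < c) :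
    IntegrableOn (fun s : ℝ => (1 + s) ^ (-c) * s ^ p) (Ioi 0) := by
  have hcont : ContinuousOn (fun s : ℝ => (1 + s) ^ (-c) * s ^ p) (Ioi 0) := fun s (hs : 0 < s) =>
    ((by fun_prop : ContinuousAt (fun s : ℝ => 1 + s) s).rpow_const (Or.inl (by linarith))).mul
      (continuousAt_id.rpow_const (Or.inl hs.ne')) |>.continuousWithinAt
  rw [← Ioc_union_Ioi_eq_Ioi zero_le_one]
  refine IntegrableOn.union ?_ ?_
  · refine Integrable.mono' (intervalIntegral.intervalIntegrable_rpow' hp (a := 0) (b := 1)).1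
      ?_ ?_
    · exact (hcont.mono Ioc_subset_Ioi_self).aestronglyMeasurable measurableSet_Ioc
    · refine (ae_restrict_iff' measurableSet_Ioc).2 (.of_forall fun s ⟨hs, _⟩ => ?_)
      rw [norm_of_nonneg (by positivity)]
      exact mul_le_of_le_one_left (by positivity)
        (rpow_le_one_of_one_le_of_nonpos (by linarith) (by linarith))
  · refine Integrable.mono' (integrableOn_Ioi_rpow_of_lt (a := p - c) (by linarith) one_pos) ?_ ?_
    · exact (hcont.mono (Ioi_subset_Ioi zero_le_one)).aestronglyMeasurable measurableSet_Ioi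
    · refine (ae_restrict_iff' measurableSet_Ioi).2 (.of_forall fun s (hs : 1 < s) => ?_)
      rw [norm_of_nonneg (by positivity), sub_eq_neg_add, rpow_add (by linarith)]
      exact mul_le_mul_of_nonneg_right
        (rpow_le_rpow_of_nonpos (by linarith) (by linarith) (by linarith)) (by positivity)

lemma rpow_integral_rpow_mul_le {α : Type*} [MeasurableSpace α] {μ : Measure α} {f w : α → ℝ}
    {D q : ℝ} (hq : 0 < q) (hD : 0 ≤ D) (hw : Integrable w μ) (hw0 : 0 ≤ᵐ[μ] w)
    (hf0 : 0 ≤ᵐ[μ] f) (hfD : ∀ᵐ x ∂μ, f x ≤ D) :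
    (∫ x, f x ^ q * w x ∂μ) ^ (1 / q) ≤ D * (∫ x, w x ∂μ) ^ (1 / q) := by
  have hmono : ∫ x, f x ^ q * w x ∂μ ≤ ∫ x, D ^ q * w x ∂μ := by
    refine integral_mono_of_nonneg ?_ (hw.const_mul _) ?_
    · filter_upwards [hf0, hw0] with x hfx hwx using mul_nonneg (rpow_nonneg hfx q) hwx
    · filter_upwards [hf0, hw0, hfD] with x hfx hwx hfDx
      exact mul_le_mul_of_nonneg_right (rpow_le_rpow hfx hfDx hq.le) hwx
  have hI : 0 ≤ ∫ x, w x ∂μ := integral_nonneg_of_ae hw0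
  calc (∫ x, f x ^ q * w x ∂μ) ^ (1 / q) ≤ (D ^ q * ∫ x, w x ∂μ) ^ (1 / q) := by
        rw [← integral_const_mul]
        exact rpow_le_rpow (integral_nonneg_of_ae (by
          filter_upwards [hf0, hw0] with x hfx hwx using mul_nonneg (rpow_nonneg hfx q) hwx))
          hmono (by positivity)
    _ = D * (∫ x, w x ∂μ) ^ (1 / q) := by
      rw [mul_rpow (by positivity) hI, ← rpow_mul hD, mul_one_div_cancel hq.ne', rpow_one]

lemma rpow_neg_mul_abs_mul_le {f : ℝ → ℝ} {K μ lam r s : ℝ} (hμ : -(1 / 2) ≤ μ)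
    (hf : ∀ x, 0 < x → |f x| ≤ K * (x ^ μ * (1 + x) ^ (-(μ + 1 / 2))))
    (hlam : 0 < lam) (hr : 0 < r) (hs : 0 < s) :
    (r * s) ^ (-μ) * |f (lam * r) * f (lam * s)|
      ≤ K ^ 2 * lam ^ (2 * μ) * (1 + lam * r) ^ (-(μ + 1 / 2)) := by
  have hfr := hf _ (mul_pos hlam hr)
  have hfs := hf _ (mul_pos hlam hs)
  have hdecay : (1 + lam * s) ^ (-(μ + 1 / 2)) ≤ 1 :=
    rpow_le_one_of_one_le_of_nonpos (by nlinarith) (by linarith)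
  calc (r * s) ^ (-μ) * |f (lam * r) * f (lam * s)|
      ≤ (r * s) ^ (-μ) * ((K * ((lam * r) ^ μ * (1 + lam * r) ^ (-(μ + 1 / 2))))
          * (K * ((lam * s) ^ μ * (1 + lam * s) ^ (-(μ + 1 / 2))))) := by
        rw [abs_mul]
        gcongr
        exact (abs_nonneg _).trans hfr
    _ = K ^ 2 * lam ^ (2 * μ) * (1 + lam * r) ^ (-(μ + 1 / 2))
          * (1 + lam * s) ^ (-(μ + 1 / 2)) := by
        rw [mul_rpow hlam.le hr.le, mul_rpow hlam.le hs.le, mul_rpow hr.le hs.le, rpow_neg hr.le,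
          rpow_neg hs.le, two_mul, rpow_add hlam]
        field_simp
    _ ≤ K ^ 2 * lam ^ (2 * μ) * (1 + lam * r) ^ (-(μ + 1 / 2)) :=
        mul_le_of_le_one_right (by positivity) hdecay

theorem imag_resolvent_Lq_bound_lowfreq
    (n : ℕ) (hn : 3 ≤ n) (ν : ℝ) (hν : ((n : ℝ) - 2) / 2 ≤ ν)
    (q : ℝ) (hq : 1 ≤ q) (σ : ℝ) (hσ : (n : ℝ) / q < σ) :
    ∃ C > (0 : ℝ), ∀ lam : ℝ, 0 < lam → lam ≤ 1 → ∀ r : ℝ, 0 < r →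
      (∫ s in Ioi (0 : ℝ),
          ((r * s) ^ (-(((n : ℝ) - 2) / 2)) * |besselJ ν (lam * r) * besselJ ν (lam * s)|) ^ q *
            (1 + s) ^ (-(q * σ)) * s ^ ((n : ℝ) - 1)) ^ (1 / q)
        ≤ C * lam ^ ((n : ℝ) - 2) * (1 + lam * r) ^ (-(((n : ℝ) - 1) / 2)) := by
  have hn' : (3 : ℝ) ≤ n := by exact_mod_cast hn
  have hq0 : 0 < q := by linarith
  have hqσ : (n : ℝ) < q * σ := by rwa [div_lt_iff₀' hq0] at hσ
  obtain ⟨K, hK⟩ := exists_abs_besselJ_le (by linarith) (by linarith) hν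
  have hw := integrableOn_one_add_rpow_neg_mul_rpow (p := (n : ℝ) - 1) (by linarith)
    (show (n : ℝ) - 1 + 1 < q * σ by linarith)
  set I := ∫ s in Ioi (0 : ℝ), (1 + s) ^ (-(q * σ)) * s ^ ((n : ℝ) - 1)
  have hI : 0 ≤ I := setIntegral_nonneg measurableSet_Ioi fun s (hs : 0 < s) => by positivity
  refine ⟨K ^ 2 * I ^ (1 / q) + 1, by positivity, fun lam hlam _ r hr => ?_⟩
  have hkernel : ∀ s ∈ Ioi (0 : ℝ),
      (r * s) ^ (-(((n : ℝ) - 2) / 2)) * |besselJ ν (lam * r) * besselJ ν (lam * s)|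
        ≤ K ^ 2 * lam ^ ((n : ℝ) - 2) * (1 + lam * r) ^ (-(((n : ℝ) - 1) / 2)) := fun s hs => by
    have := rpow_neg_mul_abs_mul_le (by linarith) hK hlam hr hs
    rwa [show 2 * (((n : ℝ) - 2) / 2) = n - 2 by ring,
      show ((n : ℝ) - 2) / 2 + 1 / 2 = ((n : ℝ) - 1) / 2 by ring] at this
  calc _ = (∫ s in Ioi (0 : ℝ),
          ((r * s) ^ (-(((n : ℝ) - 2) / 2)) * |besselJ ν (lam * r) * besselJ ν (lam * s)|) ^ q *
            ((1 + s) ^ (-(q * σ)) * s ^ ((n : ℝ) - 1))) ^ (1 / q) := by simp only [mul_assoc]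
    _ ≤ K ^ 2 * lam ^ ((n : ℝ) - 2) * (1 + lam * r) ^ (-(((n : ℝ) - 1) / 2)) * I ^ (1 / q) :=
        rpow_integral_rpow_mul_le hq0 (by positivity) hw
          ((ae_restrict_iff' measurableSet_Ioi).2 (.of_forall fun s (hs : 0 < s) => by positivity))
          ((ae_restrict_iff' measurableSet_Ioi).2 (.of_forall fun s (hs : 0 < s) => by positivity))
          ((ae_restrict_iff' measurableSet_Ioi).2 (.of_forall hkernel))
    _ ≤ _ := by
        rw [mul_right_comm, mul_right_comm (K ^ 2)]
        gcongr
        linarith
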